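/- For every temporary puzzle piece, the auras of the right gashes of its three resolutions sum to zero in ℂ[δ₀,δ₁,δ₂]. -/

import Mathlib

/-!
STATEMENT 13: For every temporary puzzle piece, the auras of the right
gashes of its three resolutions sum to zero in ℂ[δ₀,δ₁,δ₂].  For the upward
temporary piece (x, y, z) with (unique) witnesses x′,x″,y′,y″,z′,z″, the
right gashes of the three resolutions are: the right-side gash (orig y,
new y′, outward direction 0) of the keep-left resolution, the left-side
gash (orig x, new x′, outward direction 2) of the keep-bottom resolution,
and the bottom gash (orig z, new z′, outward direction 4) of the keep-right
resolution.
-/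

set_option maxHeartbeats 1000000

open scoped Classical

/-- Puzzle labels are encoded as natural numbers; the meaningful ones are
0–7, and 0, 1, 2 are the *simple* labels. -/
abbrev Label := ℕ

/-- The valid upward triangular puzzle pieces in standard position,
as (left, right, bottom) label triples. -/
def basePieces : List (Label × Label × Label) :=
  [(0,0,0), (1,1,1), (2,2,2), (0,1,3), (1,2,4), (0,2,5), (3,2,6), (0,4,7)]

/-- Valid upward triangular pieces: the base list together with its
120° and 240° rotations. -/
def ValidUp (l r b : Label) : Prop :=
  (l, r, b) ∈ basePieces ∨ (r, b, l) ∈ basePieces ∨ (b, l, r) ∈ basePieces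

/-- Valid downward triangular pieces, with (left, right, top) labels:
precisely the rotations (by 60°, 180° or 300°) of valid upward pieces. -/
def ValidDown (l r t : Label) : Prop := ValidUp r l t

/-- Valid *vertical* equivariant (rhombus) puzzle pieces: opposite sides
carry equal labels, and `ValidEquivVert p q` means that the NW and SE sides
carry `p` while the NE and SW sides carry `q`, where `(p, q)` runs through
the paper's list of label pairs in its fixed orientation. -/
def ValidEquivVert (p q : Label) : Prop :=
  (p, q) ∈ ([(0,1), (1,2), (0,2), (2,3), (0,4), (3,4), (0,6), (2,7)] :
    List (Label × Label))

/-- A directed gash, recorded without its location in a puzzle: `dir : Fin 6`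
encodes the orientation of the underlying lattice edge together with the
perpendicular direction of the gash, as the unit normal vector
`exp (π i (2 dir + 1) / 6)` pointing towards the side of the original label;
`orig` and `new` are the original and the new label. -/
structure PreGash where
  dir : Fin 6
  orig : Label
  new : Label
deriving DecidableEq

/-- `g` is an honest directed gash: its two labels are distinct puzzle
labels (hence there are 6 · 8 · 7 = 336 directed gashes). -/
def IsDGash (g : PreGash) : Prop := g.orig ≠ g.new ∧ g.orig < 8 ∧ g.new < 8

/-- Immediate reachability: `h` is obtained from `g` by propagating `g`
across one triangular puzzle piece.  Normal directions: `1`/`5`/`3` point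
into an upward triangle through its bottom/left/right side, and `4`/`0`/`2`
point into a downward triangle through its top/left/right side; the piece
`q` carries the original label of `g` on the gashed side, its replacement
`q'` carries the new label there, `q` and `q'` agree on exactly one further
side, and `h` sits on the remaining side, with original label from `q` and
new label from `q'`, directed away from the replaced piece. -/
def Imm (g h : PreGash) : Prop :=
  (g.dir = 1 ∧ ∃ l r r', ValidUp l r g.orig ∧ ValidUp l r' g.new ∧ r ≠ r' ∧ h = ⟨0, r, r'⟩) ∨
  (g.dir = 1 ∧ ∃ l l' r, ValidUp l r g.orig ∧ ValidUp l' r g.new ∧ l ≠ l' ∧ h = ⟨2, l, l'⟩) ∨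
  (g.dir = 5 ∧ ∃ r b b', ValidUp g.orig r b ∧ ValidUp g.new r b' ∧ b ≠ b' ∧ h = ⟨4, b, b'⟩) ∨
  (g.dir = 5 ∧ ∃ r r' b, ValidUp g.orig r b ∧ ValidUp g.new r' b ∧ r ≠ r' ∧ h = ⟨0, r, r'⟩) ∨
  (g.dir = 3 ∧ ∃ l b b', ValidUp l g.orig b ∧ ValidUp l g.new b' ∧ b ≠ b' ∧ h = ⟨4, b, b'⟩) ∨
  (g.dir = 3 ∧ ∃ l l' b, ValidUp l g.orig b ∧ ValidUp l' g.new b ∧ l ≠ l' ∧ h = ⟨2, l, l'⟩) ∨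
  (g.dir = 4 ∧ ∃ l r r', ValidDown l r g.orig ∧ ValidDown l r' g.new ∧ r ≠ r' ∧ h = ⟨5, r, r'⟩) ∨
  (g.dir = 4 ∧ ∃ l l' r, ValidDown l r g.orig ∧ ValidDown l' r g.new ∧ l ≠ l' ∧ h = ⟨3, l, l'⟩) ∨
  (g.dir = 0 ∧ ∃ r t t', ValidDown g.orig r t ∧ ValidDown g.new r t' ∧ t ≠ t' ∧ h = ⟨1, t, t'⟩) ∨
  (g.dir = 0 ∧ ∃ r r' t, ValidDown g.orig r t ∧ ValidDown g.new r' t ∧ r ≠ r' ∧ h = ⟨5, r, r'⟩) ∨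
  (g.dir = 2 ∧ ∃ l t t', ValidDown l g.orig t ∧ ValidDown l g.new t' ∧ t ≠ t' ∧ h = ⟨1, t, t'⟩) ∨
  (g.dir = 2 ∧ ∃ l l' t, ValidDown l g.orig t ∧ ValidDown l' g.new t ∧ l ≠ l' ∧ h = ⟨3, l, l'⟩)

/-- The class `[g]` of a directed gash: all directed gashes reachable from
`g` by finitely many steps of immediate reachability. -/
def classOf (g : PreGash) : Set PreGash := {h | Relation.ReflTransGen Imm g h}

/-- The opposite gash: interchange the two labels, keep the direction. -/
def PreGash.opp (g : PreGash) : PreGash := ⟨g.dir, g.new, g.orig⟩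

/-- `g` and `h` are in opposite classes. -/
def OppClasses (g h : PreGash) : Prop := classOf g.opp = classOf h

open MvPolynomial in
/-- The ring ℂ[δ₀, δ₁, δ₂] in which auras live. -/
abbrev DRing := MvPolynomial (Fin 3) ℂ

/-- ζ = exp(π i / 6). -/
noncomputable def zet : ℂ := Complex.exp ((Real.pi : ℂ) * Complex.I / 6)

/-- The δ-variable attached to a simple label. -/
noncomputable def dvar (a : Label) : DRing :=
  if h : a < 3 then MvPolynomial.X (⟨a, h⟩ : Fin 3) else 0

/-- `A k a` is the aura of a semi-labeled edge carrying the label `a`, whose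
unit normal `zet ^ (2k+1)` points to the side of the label.  `AuraSimple`
says that for a simple label the aura is `δ_a` times this unit normal. -/
def AuraSimple (A : Fin 6 → Label → DRing) : Prop :=
  ∀ (k : Fin 6) (a : Label), a < 3 →
    A k a = MvPolynomial.C (zet ^ (2 * (k : ℕ) + 1)) * dvar a

/-- For every valid triangular puzzle piece the auras of its three sides,
with labels placed inside the piece, sum to zero (for both the upward and
the downward rotations of the piece). -/
def AuraPiece (A : Fin 6 → Label → DRing) : Prop :=
  ∀ l r b, ValidUp l r b →
    A 5 l + A 3 r + A 1 b = 0 ∧ A 0 r + A 2 l + A 4 b = 0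

/-- The aura of a directed gash: the sum of the auras of its two
semi-labeled edges. -/
noncomputable def gashAura (A : Fin 6 → Label → DRing) (g : PreGash) : DRing :=
  A g.dir g.orig + A (g.dir + 3) g.new


/-!
The sum splits into its original-label part `A 0 y + A 2 x + A 4 z` and its new-label part
`A 5 x′ + A 3 y′ + A 1 z′`. The latter is the upward relation of the piece `(x′, y′, z′)`;
in the former, the downward relations of `(x, y′, z″)`, `(x′, y″, z)`, `(x″, y, z′)` minus
those of `(x′, y′, z′)`, `(x″, y″, z″)` cancel every primed label.
-/

theorem temp_right_gash_auras_sum_zero_general (x y z x' x'' y' y'' z' z'' : Label)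
    (h1 : ValidUp x y' z'') (h2 : ValidUp x' y'' z) (h3 : ValidUp x'' y z')
    (h4 : ValidUp x' y' z') (h5 : ValidUp x'' y'' z'')
    (A : Fin 6 → Label → DRing) (hP : AuraPiece A) :
    gashAura A ⟨0, y, y'⟩ + gashAura A ⟨2, x, x'⟩ + gashAura A ⟨4, z, z'⟩ = 0 := by
  have horig : A 0 y + A 2 x + A 4 z = 0 := by
    linear_combination (hP _ _ _ h1).2 + (hP _ _ _ h2).2 + (hP _ _ _ h3).2
      - (hP _ _ _ h4).2 - (hP _ _ _ h5).2
  have hnew : A 5 x' + A 3 y' + A 1 z' = 0 := (hP _ _ _ h4).1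
  change A 0 y + A 3 y' + (A 2 x + A 5 x') + (A 4 z + A 1 z') = 0
  linear_combination horig + hnew

theorem temp_right_gash_auras_sum_zero (x y z x' x'' y' y'' z' z'' : Label)
    (h1 : ValidUp x y' z'') (h2 : ValidUp x' y'' z) (h3 : ValidUp x'' y z')
    (h4 : ValidUp x' y' z') (h5 : ValidUp x'' y'' z'')
    (A : Fin 6 → Label → DRing) (hA : AuraSimple A) (hP : AuraPiece A) :
    gashAura A ⟨0, y, y'⟩ + gashAura A ⟨2, x, x'⟩ + gashAura A ⟨4, z, z'⟩ = 0 :=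
  temp_right_gash_auras_sum_zero_general x y z x' x'' y' y'' z' z'' h1 h2 h3 h4 h5 A hP
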